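/- Let γ : I → X be locally of bounded variation with speed measure ν. Then for every t ∈ I, ν({t}) = d(γ(t−),γ(t)) + d(γ(t),γ(t+)), where d(γ(t−),γ(t)) := lim_{s↗t} d(γ(s),γ(t)) (interpreted as 0 if t = inf I ∈ I) and d(γ(t),γ(t+)) := lim_{s↘t} d(γ(t),γ(s)) (interpreted as 0 if t = sup I ∈ I); these limits exist. -/

import Mathlib

/-!
Pass to the completion of `X`, where a function of locally bounded variation has one-sided
limits `γ(t-)` and `γ(t+)`; distances and variations do not change. On a relatively open
interval `S ∋ t` of finite variation, the variation then splits as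
`Var(S ∩ (-∞, t)) + d(γ(t-), γ(t)) + d(γ(t), γ(t+)) + Var(S ∩ (t, ∞))`, while `ν S` splits as
`ν (S ∩ (-∞, t)) + ν {t} + ν (S ∩ (t, ∞))`. The two open halves have the same finite values on
both sides, so they cancel.
-/

open Filter Topology Set MeasureTheory

/-- `ν` is the speed measure of `γ` on the interval `I`: a Borel measure on `I`
(vanishing outside `I`) whose value on every subinterval of `I` that is relatively open
in `I` equals the variation of `γ` there. -/
def IsSpeedMeasure {X : Type*} [MetricSpace X] (γ : ℝ → X) (I : Set ℝ)
    (ν : Measure ℝ) : Prop :=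
  ν Iᶜ = 0 ∧
  ∀ J : Set ℝ, J ⊆ I → J.OrdConnected → (∃ U : Set ℝ, IsOpen U ∧ J = U ∩ I) →
    ν J = eVariationOn γ J

open OrderDual

open scoped ENNReal

theorem Isometry.eVariationOn_comp {α E F : Type*} [LinearOrder α] [PseudoEMetricSpace E]
    [PseudoEMetricSpace F] {φ : E → F} (hφ : Isometry φ) (f : α → E) (s : Set α) :
    eVariationOn (φ ∘ f) s = eVariationOn f s := by
  simp only [eVariationOn, Function.comp_apply, hφ.edist_eq]

theorem eVariationOn_eq_inter_Iic_add_inter_Ici {α E : Type*} [LinearOrder α]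
    [PseudoEMetricSpace E] (f : α → E) {s : Set α} {t : α} (ht : t ∈ s) :
    eVariationOn f s = eVariationOn f (s ∩ Iic t) + eVariationOn f (s ∩ Ici t) := by
  rw [← eVariationOn.union f (s := s ∩ Iic t) (t := s ∩ Ici t) ⟨⟨ht, le_rfl⟩, fun _ h => h.2⟩
    ⟨⟨ht, le_rfl⟩, fun _ h => h.2⟩, ← inter_union_distrib_left, Iic_union_Ici, inter_univ]

theorem measure_eq_inter_Iio_add_singleton_add_inter_Ioi {α : Type*} [LinearOrder α]
    [TopologicalSpace α] [OrderClosedTopology α] [MeasurableSpace α] [OpensMeasurableSpace α]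
    (μ : Measure α) {s : Set α} {t : α} (ht : t ∈ s) :
    μ s = μ (s ∩ Iio t) + μ {t} + μ (s ∩ Ioi t) := by
  have hIic : s ∩ Iic t = s ∩ Iio t ∪ {t} := by
    rw [← Iio_insert, insert_eq, inter_union_distrib_left, union_comm,
      inter_singleton_of_mem ht]
  rw [← measure_inter_add_sdiff s measurableSet_Iic, sdiff_eq, compl_Iic, hIic,
    measure_union (disjoint_singleton_right.2 fun h => lt_irrefl t h.2)
      (measurableSet_singleton t)]

section LinearOrder

variable {α : Type*} [LinearOrder α] {I : Set α} {t : α}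

theorem exists_lt_inter_Ioc_subset_Icc [NoMinOrder α] (ht : t ∈ I) :
    ∃ y < t, ∃ a ∈ I, I ∩ Ioc y t ⊆ Icc a t := by
  by_cases h : ∃ a ∈ I, a < t
  · obtain ⟨a, ha, hat⟩ := h
    exact ⟨a, hat, a, ha, fun x hx => Ioc_subset_Icc_self hx.2⟩
  · push Not at h
    obtain ⟨y, hy⟩ := exists_lt t
    exact ⟨y, hy, t, ht, fun x hx => ⟨h x hx.1, hx.2.2⟩⟩

theorem exists_inter_Ioo_subset_Icc [NoMinOrder α] [NoMaxOrder α] (ht : t ∈ I) :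
    ∃ y < t, ∃ z > t, ∃ a ∈ I, ∃ b ∈ I, I ∩ Ioo y z ⊆ Icc a b := by
  obtain ⟨y, hyt, a, ha, hleft⟩ := exists_lt_inter_Ioc_subset_Icc ht
  obtain ⟨z, hzt, b, hb, hright⟩ :=
    exists_lt_inter_Ioc_subset_Icc (I := ofDual ⁻¹' I) (t := toDual t) ht
  have hat : a ≤ t := (hleft ⟨ht, hyt, le_rfl⟩).1
  have htb : t ≤ ofDual b := (hright (a := toDual t) ⟨ht, hzt, le_rfl⟩).1
  refine ⟨y, hyt, ofDual z, hzt, a, ha, ofDual b, hb, fun x hx => ?_⟩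
  rcases le_total x t with hxt | hxt
  · exact Icc_subset_Icc_right htb (hleft ⟨hx.1, hx.2.1, hxt⟩)
  · exact Icc_subset_Icc_left hat (hright (a := toDual x) ⟨hx.1, hx.2.2, hxt⟩).symm

variable [TopologicalSpace α] [OrderTopology α] [DenselyOrdered α]
  {E : Type*} [PseudoEMetricSpace E] [CompleteSpace E] {f : α → E} {U : Set α}

theorem exists_tendsto_left_eVariationOn_inter_Iic (hI : I.OrdConnected) (ht : t ∈ I)
    (hU : U ∈ 𝓝 t) (hf : BoundedVariationOn f (I ∩ U)) :
    ∃ l, Tendsto f (𝓝[I ∩ Iio t] t) (𝓝 l) ∧ (I ∩ Iio t = ∅ → l = f t) ∧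
      eVariationOn f (I ∩ U ∩ Iic t) = eVariationOn f (I ∩ U ∩ Iio t) + edist (f t) l := by
  have hnhds : 𝓝[I ∩ U ∩ Iio t] t = 𝓝[I ∩ Iio t] t := by
    rw [inter_right_comm]; exact nhdsWithin_inter_of_mem' (mem_nhdsWithin_of_mem_nhds hU)
  rcases eq_empty_or_nonempty (I ∩ Iio t) with hempty | ⟨a, haI, hat⟩
  · refine ⟨f t, by simp [hempty], fun _ => rfl, ?_⟩
    have hIio : I ∩ U ∩ Iio t = ∅ := by rw [inter_right_comm, hempty, empty_inter]
    have hIic : (I ∩ U ∩ Iic t).Subsingleton := by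
      refine (subsingleton_singleton (a := t)).anti fun x hx => ?_
      by_contra hxt
      exact eq_empty_iff_forall_notMem.1 hempty x ⟨hx.1.1, lt_of_le_of_ne hx.2 hxt⟩
    rw [hIio, eVariationOn.subsingleton f hIic, eVariationOn.subsingleton f subsingleton_empty,
      edist_self, add_zero]
  · have : (𝓝[I ∩ Iio t] t).NeBot := by
      refine (nhdsLT_neBot_of_exists_lt ⟨a, hat⟩).mono ?_
      rw [← nhdsWithin_Ioo_eq_nhdsLT hat]
      exact nhdsWithin_mono _ fun x hx => ⟨hI.out haI ht (Ioo_subset_Icc_self hx), hx.2⟩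
    obtain ⟨l, hl⟩ := hf.exists_tendsto_left t
    rw [hnhds] at hl
    refine ⟨l, hl, fun h => absurd h (nonempty_iff_ne_empty.mp ⟨a, haI, hat⟩), ?_⟩
    exact eVariationOn.eVariationOn_on_inter_Iic_eq_Iio_add_edist (by rwa [hnhds])
      ⟨ht, mem_of_mem_nhds hU⟩ (by rwa [hnhds])

theorem exists_tendsto_right_eVariationOn_inter_Ici (hI : I.OrdConnected) (ht : t ∈ I)
    (hU : U ∈ 𝓝 t) (hf : BoundedVariationOn f (I ∩ U)) :
    ∃ r, Tendsto f (𝓝[I ∩ Ioi t] t) (𝓝 r) ∧ (I ∩ Ioi t = ∅ → r = f t) ∧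
      eVariationOn f (I ∩ U ∩ Ici t) = eVariationOn f (I ∩ U ∩ Ioi t) + edist (f t) r := by
  obtain ⟨r, hr, hempty, hvar⟩ := exists_tendsto_left_eVariationOn_inter_Iic (f := f ∘ ofDual)
    (I := ofDual ⁻¹' I) (U := ofDual ⁻¹' U) (t := toDual t) hI.dual ht hU hf.ofDual
  refine ⟨r, hr, hempty, ?_⟩
  rwa [← preimage_inter, Iic_toDual, Iio_toDual, ← preimage_inter, ← preimage_inter,
    eVariationOn.comp_ofDual, eVariationOn.comp_ofDual] at hvar

end LinearOrder

section SpeedMeasure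

variable {X : Type*} [MetricSpace X] {γ : ℝ → X} {I : Set ℝ} {ν : Measure ℝ}

theorem IsSpeedMeasure.apply_inter_of_isOpen (hν : IsSpeedMeasure γ I ν) (hI : I.OrdConnected)
    {U : Set ℝ} (hU : IsOpen U) (hUc : U.OrdConnected) :
    ν (I ∩ U) = eVariationOn γ (I ∩ U) :=
  hν.2 _ inter_subset_left (hI.inter hUc) ⟨U, hU, inter_comm _ _⟩

theorem IsSpeedMeasure.eVariationOn_inter_Ioo_eq (hν : IsSpeedMeasure γ I ν)
    (hI : I.OrdConnected) {y t z : ℝ} (ht : t ∈ I ∩ Ioo y z) :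
    eVariationOn γ (I ∩ Ioo y z) = eVariationOn γ (I ∩ Ioo y z ∩ Iio t) + ν {t} +
      eVariationOn γ (I ∩ Ioo y z ∩ Ioi t) := by
  rw [← hν.apply_inter_of_isOpen hI isOpen_Ioo ordConnected_Ioo,
    measure_eq_inter_Iio_add_singleton_add_inter_Ioi ν ht, inter_assoc, inter_assoc,
    hν.apply_inter_of_isOpen hI (isOpen_Ioo.inter isOpen_Iio)
      (ordConnected_Ioo.inter ordConnected_Iio),
    hν.apply_inter_of_isOpen hI (isOpen_Ioo.inter isOpen_Ioi)
      (ordConnected_Ioo.inter ordConnected_Ioi)]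

end SpeedMeasure

/-- The speed measure of a point: `ν({t}) = d(γ(t-),γ(t)) + d(γ(t),γ(t+))`,
where the one-sided limits exist (and are interpreted as `0` at the corresponding
endpoint of `I`). -/
theorem speed_measure_singleton {X : Type*} [MetricSpace X]
    (I : Set ℝ) (hI : I.OrdConnected) (γ : ℝ → X)
    (hγ : ∀ a ∈ I, ∀ b ∈ I, a ≤ b → eVariationOn γ (Set.Icc a b) < ⊤)
    (ν : Measure ℝ) (hν : IsSpeedMeasure γ I ν)
    (t : ℝ) (ht : t ∈ I) :
    ∃ L R : ℝ,
      Tendsto (fun s => dist (γ s) (γ t)) (𝓝[I ∩ Set.Iio t] t) (𝓝 L) ∧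
      (I ∩ Set.Iio t = ∅ → L = 0) ∧
      Tendsto (fun s => dist (γ t) (γ s)) (𝓝[I ∩ Set.Ioi t] t) (𝓝 R) ∧
      (I ∩ Set.Ioi t = ∅ → R = 0) ∧
      ν {t} = ENNReal.ofReal (L + R) := by
  obtain ⟨y, hyt, z, hzt, a, ha, b, hb, hsub⟩ := exists_inter_Ioo_subset_Icc ht
  have htS : t ∈ I ∩ Ioo y z := ⟨ht, hyt, hzt⟩
  have hS : BoundedVariationOn γ (I ∩ Ioo y z) := ne_top_of_le_ne_top
    (hγ a ha b hb ((hsub htS).1.trans (hsub htS).2)).ne (eVariationOn.mono γ hsub)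
  let g : ℝ → UniformSpace.Completion X := (↑) ∘ γ
  have hvar : ∀ s, eVariationOn g s = eVariationOn γ s :=
    UniformSpace.Completion.coe_isometry.eVariationOn_comp γ
  have hSg : BoundedVariationOn g (I ∩ Ioo y z) := by rwa [BoundedVariationOn, hvar]
  obtain ⟨l, hl, hl_empty, hl_var⟩ :=
    exists_tendsto_left_eVariationOn_inter_Iic hI ht (Ioo_mem_nhds hyt hzt) hSg
  obtain ⟨r, hr, hr_empty, hr_var⟩ :=
    exists_tendsto_right_eVariationOn_inter_Ici hI ht (Ioo_mem_nhds hyt hzt) hSg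
  rw [hvar, hvar] at hl_var hr_var
  refine ⟨dist l (g t), dist (g t) r, ?_, fun h => by rw [hl_empty h, dist_self], ?_,
    fun h => by rw [hr_empty h, dist_self], ?_⟩
  · simpa [g, UniformSpace.Completion.dist_eq] using hl.dist (tendsto_const_nhds (x := g t))
  · simpa [g, UniformSpace.Completion.dist_eq] using (tendsto_const_nhds (x := g t)).dist hr
  have hsplit := hν.eVariationOn_inter_Ioo_eq hI htS
  rw [eVariationOn_eq_inter_Iic_add_inter_Ici γ htS, hl_var, hr_var] at hsplit
  have hfin : eVariationOn γ (I ∩ Ioo y z ∩ Iio t) + eVariationOn γ (I ∩ Ioo y z ∩ Ioi t) ≠ ⊤ :=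
    ENNReal.add_ne_top.2 ⟨ne_top_of_le_ne_top hS (eVariationOn.mono γ inter_subset_left),
      ne_top_of_le_ne_top hS (eVariationOn.mono γ inter_subset_left)⟩
  rw [ENNReal.ofReal_add dist_nonneg dist_nonneg, ← edist_dist, ← edist_dist, edist_comm l]
  refine (ENNReal.add_right_inj hfin).1 ?_
  convert hsplit.symm using 1 <;> ring
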